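/- Bad codeword lemma: Let p be prime, let C ⊆ Z_p^{2n} be a linear subspace with C ⊆ C^⊥ (a stabilizer), and let λ : C → ℂ be a function such that the joint eigenspace Q = {ψ ∈ ℂ^{p^n} : XZ(c)ψ = λ(c)ψ for all c ∈ C} is nonzero (a stabilizer code). Then there exists a unit vector φ ∈ Q such that for every v ∈ Z_p^{2n} with v ∉ C, |⟨φ, XZ(v)φ⟩| ≤ 3/4. (In particular, for any fixed decoding rule, the fidelity of the decoded state for this codeword under any uncorrectable error XZ(e) is at most (3/4)² = 9/16.) -/

import Mathlib

open scoped BigOperators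
open Matrix

/-- `omg p` is the complex primitive `p`-th root of unity `exp(2πi/p)`. -/
noncomputable def omg (p : ℕ) : ℂ := Complex.exp (2 * Real.pi * Complex.I / p)

/-- The generalized Pauli matrix `XZ(u) = X^{a_1}Z^{b_1} ⊗ ⋯ ⊗ X^{a_n}Z^{b_n}`
for `u = ((a_1,b_1),…,(a_n,b_n)) ∈ (Z_p²)ⁿ`, written out entrywise with respect to the
computational basis of `(ℂ^p)^{⊗n} ≃ ℂ^{p^n}`, whose coordinates are indexed by
`Fin n → ZMod p`.  (It is the matrix determined by
`XZ(u) |i₁ … iₙ⟩ = ∏_t ω^{b_t i_t} |i₁+a₁, …, iₙ+aₙ⟩`.) -/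
noncomputable def XZ (p n : ℕ) (u : Fin n → ZMod p × ZMod p) :
    Matrix (Fin n → ZMod p) (Fin n → ZMod p) ℂ :=
  fun j i => ∏ t : Fin n, if j t = i t + (u t).1 then omg p ^ ((u t).2 * i t).val else 0

/-- The symplectic inner product `⟨u,v⟩ = Σ b_i c_i − a_i d_i` on `Z_p^{2n}`. -/
def symp (p n : ℕ) (u v : Fin n → ZMod p × ZMod p) : ZMod p :=
  ∑ t : Fin n, ((u t).2 * (v t).1 - (u t).1 * (v t).2)

/-- The standard Hermitian inner product on `I → ℂ`. -/
noncomputable def cinner {I : Type*} [Fintype I] (x y : I → ℂ) : ℂ :=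
  ∑ i, (starRingEnd ℂ) (x i) * y i

/-!
Extend the isotropic `C` to a Lagrangian `L₀` and pick, inside the code, a joint eigenvector `φ₀`
of all `XZ(m)`, `m ∈ L₀`. Every `v ∉ L₀ = L₀^⊥` fails to commute with some `XZ(c)`, `c ∈ L₀`,
up to a phase `ω^s ≠ 1`, which forces `⟨φ₀, XZ(v) φ₀⟩ = 0`; so if `L₀ = C` we are done.
Otherwise choose a second Lagrangian `L₁ ⊇ C` with `L₀ ∩ L₁ = C`, a joint eigenvector `φ₁` of `L₁`
in the code, and let `φ` be `φ₀ + θ φ₁` normalised, the phase `θ` making `c = θ⟨φ₀, φ₁⟩ ≥ 0`.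
For `w ∈ L₁ \ L₀` the vectors `XZ(w)^r φ₀`, `0 ≤ r < p`, are orthonormal and have overlaps of
equal modulus with every eigenvector of `XZ(w)`, such as `XZ(v) φ₁`; by Bessel's inequality the
cross terms `⟨φ₀, XZ(v) φ₁⟩` are at most `1/√p ≤ 3/4`. Expanding `⟨φ, XZ(v) φ⟩` now bounds it by
`(1 + 2c)/(2 + 2c)` if `v` lies in `L₀` or `L₁`, and by `(3/2)/(2 + 2c)` if it lies in neither.
-/

open scoped InnerProductSpace

section InnerProductSpace

variable {E : Type*} [NormedAddCommGroup E] [InnerProductSpace ℂ E]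

namespace LinearIsometry

lemma norm_eq_one_of_apply_eq_smul {U : E →ₗᵢ[ℂ] E} {φ : E} {μ : ℂ} (hφ : φ ≠ 0)
    (h : U φ = μ • φ) : ‖μ‖ = 1 := by
  have h' := U.norm_map φ
  rw [h, norm_smul] at h'
  exact (mul_eq_right₀ (norm_ne_zero_iff.mpr hφ)).mp h'

lemma pow_apply_eq_pow_smul {U : E →ₗᵢ[ℂ] E} {x : E} {ν : ℂ} (h : U x = ν • x) (r : ℕ) :
    (U ^ r) x = ν ^ r • x := by
  induction r with
  | zero => simp
  | succ r ih => rw [pow_succ', coe_mul, Function.comp_apply, ih, map_smul, h, smul_smul, pow_succ]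

lemma inner_apply_eq_zero_of_apply_eq_smul {U : E →ₗᵢ[ℂ] E} {V : E →ₗ[ℂ] E} {φ : E} {μ ζ : ℂ}
    (hφ : U φ = μ • φ) (hUV : ∀ x, U (V x) = ζ • V (U x)) (hζ : ζ ≠ 1) :
    ⟪φ, V φ⟫_ℂ = 0 := by
  rcases eq_or_ne φ 0 with rfl | hφ0
  · simp
  have hμ : starRingEnd ℂ μ * μ = 1 := by
    rw [RCLike.conj_mul, norm_eq_one_of_apply_eq_smul hφ0 hφ]
    norm_num
  have key : ⟪φ, V φ⟫_ℂ = ζ * ⟪φ, V φ⟫_ℂ := calc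
    ⟪φ, V φ⟫_ℂ = ⟪U φ, U (V φ)⟫_ℂ := (U.inner_map_map _ _).symm
    _ = ζ * (starRingEnd ℂ μ * μ) * ⟪φ, V φ⟫_ℂ := by
      rw [hUV, hφ, map_smul, inner_smul_left, inner_smul_right, inner_smul_right]
      ring
    _ = ζ * ⟪φ, V φ⟫_ℂ := by rw [hμ, mul_one]
  have : (1 - ζ) * ⟪φ, V φ⟫_ℂ = 0 := by linear_combination key
  exact (mul_eq_zero.mp this).resolve_left (sub_ne_zero.mpr hζ.symm)

lemma orthonormal_pow_apply {U : E →ₗᵢ[ℂ] E} {φ : E} {N : ℕ} (hφ : ‖φ‖ = 1)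
    (horth : ∀ r, 0 < r → r < N → ⟪φ, (U ^ r) φ⟫_ℂ = 0) :
    Orthonormal ℂ fun t : Fin N => (U ^ (t : ℕ)) φ := by
  have hlt : ∀ s t : Fin N, s < t → ⟪(U ^ (s : ℕ)) φ, (U ^ (t : ℕ)) φ⟫_ℂ = 0 := by
    intro s t hst
    rw [← Nat.add_sub_cancel' hst.le, pow_add, coe_mul, Function.comp_apply, inner_map_map]
    exact horth _ (Nat.sub_pos_of_lt hst) (by omega)
  refine ⟨fun t => by rw [norm_map, hφ], fun s t hst => ?_⟩
  rcases lt_or_gt_of_ne hst with h | h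
  · exact hlt s t h
  · exact inner_eq_zero_symm.mp (hlt t s h)

/-- Bessel's inequality for the orthonormal orbit `φ, U φ, …, U^{N-1} φ`, whose overlaps with the
eigenvector `x` all have the same modulus. -/
lemma natCast_mul_norm_inner_sq_le {U : E →ₗᵢ[ℂ] E} {φ x : E} {ν : ℂ} {N : ℕ} (hφ : ‖φ‖ = 1)
    (horth : ∀ r, 0 < r → r < N → ⟪φ, (U ^ r) φ⟫_ℂ = 0) (hx : U x = ν • x) :
    N * ‖⟪φ, x⟫_ℂ‖ ^ 2 ≤ ‖x‖ ^ 2 := by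
  rcases eq_or_ne x 0 with rfl | hx0
  · simp
  have hν := norm_eq_one_of_apply_eq_smul hx0 hx
  have horbit : ∀ t : Fin N, ‖⟪(U ^ (t : ℕ)) φ, x⟫_ℂ‖ = ‖⟪φ, x⟫_ℂ‖ := by
    intro t
    rw [← (U ^ (t : ℕ)).inner_map_map φ x, pow_apply_eq_pow_smul hx, inner_smul_right,
      norm_mul, norm_pow, hν, one_pow, one_mul]
  simpa [horbit] using (orthonormal_pow_apply hφ horth).sum_inner_products_le x
    (s := Finset.univ)

lemma sum_norm_inner_apply_eq_of_apply_eq_smul {U : E →ₗᵢ[ℂ] E} {φ₀ φ₁ : E} {μ : ℂ} (hφ₀ : ‖φ₀‖ = 1)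
    (h : U φ₀ = μ • φ₀) (h₁ : ⟪φ₁, U φ₁⟫_ℂ = 0) :
    ‖⟪φ₀, U φ₀⟫_ℂ‖ + ‖⟪φ₀, U φ₁⟫_ℂ‖ + ‖⟪φ₁, U φ₀⟫_ℂ‖ + ‖⟪φ₁, U φ₁⟫_ℂ‖ =
      1 + 2 * ‖⟪φ₀, φ₁⟫_ℂ‖ := by
  have hμ := norm_eq_one_of_apply_eq_smul (norm_ne_zero_iff.mp (hφ₀.trans_ne one_ne_zero)) h
  have h01 : ‖⟪φ₀, U φ₁⟫_ℂ‖ = ‖⟪φ₀, φ₁⟫_ℂ‖ := by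
    rw [← U.inner_map_map φ₀ φ₁, h, inner_smul_left, norm_mul, RCLike.norm_conj, hμ, one_mul]
  rw [h01, h, inner_smul_right, inner_smul_right, inner_self_eq_norm_sq_to_K, hφ₀, h₁,
    norm_mul, norm_mul, hμ, norm_inner_symm]
  simp only [Complex.coe_algebraMap, Complex.ofReal_one, one_pow, norm_one, mul_one, one_mul,
    norm_zero, add_zero]
  ring

end LinearIsometry

/-- The normalised superposition `φ₀ + θ φ₁` with the phase `θ` chosen so that
`⟪φ₀, θ φ₁⟫ = ‖⟪φ₀, φ₁⟫‖`. -/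
lemma exists_mem_span_pair_norm_inner_apply_le (φ₀ φ₁ : E) (h₀ : ‖φ₀‖ = 1) (h₁ : ‖φ₁‖ = 1) :
    ∃ φ ∈ Submodule.span ℂ {φ₀, φ₁}, ‖φ‖ = 1 ∧ ∀ T : E →ₗ[ℂ] E,
      ‖⟪φ, T φ⟫_ℂ‖ * (2 + 2 * ‖⟪φ₀, φ₁⟫_ℂ‖) ≤
        ‖⟪φ₀, T φ₀⟫_ℂ‖ + ‖⟪φ₀, T φ₁⟫_ℂ‖ + ‖⟪φ₁, T φ₀⟫_ℂ‖ + ‖⟪φ₁, T φ₁⟫_ℂ‖ := by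
  obtain ⟨θ, hθ, hθg⟩ := Complex.exists_norm_eq_mul_self ⟪φ₀, φ₁⟫_ℂ
  set w := φ₀ + θ • φ₁
  have hw : ‖w‖ ^ 2 = 2 + 2 * ‖⟪φ₀, φ₁⟫_ℂ‖ := by
    rw [norm_add_sq (𝕜 := ℂ), inner_smul_right, ← hθg, RCLike.re_to_complex, Complex.ofReal_re,
      norm_smul, hθ, h₀, h₁]
    ring
  have hw0 : w ≠ 0 := by
    rintro h
    rw [h, norm_zero] at hw
    nlinarith [norm_nonneg ⟪φ₀, φ₁⟫_ℂ]
  refine ⟨(‖w‖⁻¹ : ℂ) • w, ?_, norm_smul_inv_norm hw0, fun T => ?_⟩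
  · exact Submodule.smul_mem _ _ (Submodule.add_mem _ (Submodule.subset_span (by simp))
      (Submodule.smul_mem _ _ (Submodule.subset_span (by simp))))
  have hexpand : ⟪w, T w⟫_ℂ = ⟪φ₀, T φ₀⟫_ℂ + θ * ⟪φ₀, T φ₁⟫_ℂ + starRingEnd ℂ θ * ⟪φ₁, T φ₀⟫_ℂ
      + starRingEnd ℂ θ * θ * ⟪φ₁, T φ₁⟫_ℂ := by
    simp only [w, map_add, map_smul, inner_add_left, inner_add_right, inner_smul_left,
      inner_smul_right]
    ring
  have hnorm : ‖⟪w, T w⟫_ℂ‖ ≤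
      ‖⟪φ₀, T φ₀⟫_ℂ‖ + ‖⟪φ₀, T φ₁⟫_ℂ‖ + ‖⟪φ₁, T φ₀⟫_ℂ‖ + ‖⟪φ₁, T φ₁⟫_ℂ‖ := by
    rw [hexpand]
    refine norm_add₄_le.trans (le_of_eq ?_)
    simp [hθ]
  rw [← hw, map_smul, inner_smul_left, inner_smul_right, norm_mul, norm_mul, RCLike.norm_conj]
  simp only [norm_inv, Complex.norm_real, norm_norm]
  field_simp
  exact hnorm

end InnerProductSpace

open LinearMap (BilinForm)

namespace LinearMap.BilinForm

variable {K V : Type*} [Field K] [AddCommGroup V] [Module K V] {B : BilinForm K V}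

def IsLagrangian (B : BilinForm K V) (L : Submodule K V) : Prop := B.orthogonal L = L

lemma IsLagrangian.eq_of_le {L₀ L₁ : Submodule K V} (h₀ : B.IsLagrangian L₀)
    (h₁ : B.IsLagrangian L₁) (h : L₁ ≤ L₀) : L₁ = L₀ :=
  le_antisymm h (h₀ ▸ h₁ ▸ orthogonal_le h)

lemma orthogonal_le_of_orthogonal_le_sup [FiniteDimensional K V] (hB : B.Nondegenerate)
    (hB' : B.IsRefl) {L M : Submodule K V} (hL : L ≤ B.orthogonal L) (hM : M ≤ B.orthogonal M)
    (h : B.orthogonal L ≤ M ⊔ L) : B.orthogonal L ≤ L := by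
  intro v hv
  obtain ⟨m, hm, l, hl, rfl⟩ := Submodule.mem_sup.mp (h hv)
  have hmL : m ∈ B.orthogonal L := by simpa using (B.orthogonal L).sub_mem hv (hL hl)
  suffices m ∈ B.orthogonal (B.orthogonal L) from
    L.add_mem (orthogonal_orthogonal hB hB' L ▸ this) hl
  intro y hy
  obtain ⟨m', hm', l', hl', rfl⟩ := Submodule.mem_sup.mp (h hy)
  rw [map_add, LinearMap.add_apply, hM hm m' hm', hmL l' hl', add_zero]

lemma sup_span_singleton_le_orthogonal (hB : B.IsAlt) {L : Submodule K V}
    (hL : L ≤ B.orthogonal L) {x : V} (hx : x ∈ B.orthogonal L) :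
    L ⊔ K ∙ x ≤ B.orthogonal (L ⊔ K ∙ x) := by
  intro a ha b hb
  obtain ⟨l, hl, _, hs, rfl⟩ := Submodule.mem_sup.mp ha
  obtain ⟨l', hl', _, ht, rfl⟩ := Submodule.mem_sup.mp hb
  obtain ⟨s, rfl⟩ := Submodule.mem_span_singleton.mp hs
  obtain ⟨t, rfl⟩ := Submodule.mem_span_singleton.mp ht
  simp [hL hl l' hl', hx l' hl', hB.isRefl _ _ (hx l hl), hB.self_eq_zero]

lemma sup_span_singleton_inf_eq {L M : Submodule K V} {x : V} (hx : x ∉ M ⊔ L) :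
    (L ⊔ K ∙ x) ⊓ M = L ⊓ M := by
  refine le_antisymm ?_ (inf_le_inf_right M le_sup_left)
  rintro _ ⟨hz, hzM⟩
  obtain ⟨l, hl, _, hs, rfl⟩ := Submodule.mem_sup.mp hz
  obtain ⟨s, rfl⟩ := Submodule.mem_span_singleton.mp hs
  rcases eq_or_ne s 0 with rfl | hs0
  · simp_all
  refine absurd ?_ hx
  have : x = s⁻¹ • ((l + s • x) - l) := by rw [add_sub_cancel_left, inv_smul_smul₀ hs0]
  rw [this]
  exact Submodule.smul_mem _ _ (Submodule.sub_mem _ (Submodule.mem_sup_left hzM)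
    (Submodule.mem_sup_right hl))

/-- A maximal isotropic `L ⊇ D` with `L ⊓ M = D ⊓ M` is Lagrangian: otherwise some `x ∈ Lᗮ` lies
outside `M ⊔ L`, and `L ⊔ K ∙ x` would be a larger such subspace. -/
theorem exists_isLagrangian_ge_inf_eq [FiniteDimensional K V] (hB : B.Nondegenerate)
    (hB' : B.IsAlt) {D M : Submodule K V} (hD : D ≤ B.orthogonal D) (hM : M ≤ B.orthogonal M) :
    ∃ L, D ≤ L ∧ B.IsLagrangian L ∧ L ⊓ M = D ⊓ M := by
  obtain ⟨L, ⟨hDL, hL, hLM⟩, hmax⟩ := set_has_maximal_iff_noetherian.mpr inferInstance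
    {L | D ≤ L ∧ L ≤ B.orthogonal L ∧ L ⊓ M = D ⊓ M} ⟨D, le_rfl, hD, rfl⟩
  refine ⟨L, hDL, le_antisymm (not_not.mp fun hLL => ?_) hL, hLM⟩
  obtain ⟨x, hxL, hxML⟩ :=
    SetLike.not_le_iff_exists.mp (mt (orthogonal_le_of_orthogonal_le_sup hB hB'.isRefl hL hM) hLL)
  refine hmax (L ⊔ K ∙ x) ⟨hDL.trans le_sup_left, sup_span_singleton_le_orthogonal hB' hL hxL,
    (sup_span_singleton_inf_eq hxML).trans hLM⟩ (left_lt_sup.mpr fun h => hxML ?_)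
  exact Submodule.mem_sup_right (h (Submodule.mem_span_singleton_self x))

end LinearMap.BilinForm

namespace Module.End

variable {K V ι : Type*} [Field K] [IsAlgClosed K] [AddCommGroup V] [Module K V]
  [FiniteDimensional K V]

theorem exists_ne_zero_mem_forall_apply_eq_smul (f : ι → End K V)
    (hf : ∀ i j, Commute (f i) (f j)) (s : Finset ι) {W : Submodule K V} (hW : W ≠ ⊥)
    (hWf : ∀ i, ∀ w ∈ W, f i w ∈ W) : ∃ v ∈ W, v ≠ 0 ∧ ∀ i ∈ s, ∃ μ : K, f i v = μ • v := by
  classical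
  induction s using Finset.induction_on generalizing W with
  | empty =>
    obtain ⟨v, hv, hv0⟩ := Submodule.exists_mem_ne_zero_of_ne_bot hW
    exact ⟨v, hv, hv0, by simp⟩
  | insert i s _ ih =>
    have : Nontrivial W := Submodule.nontrivial_iff_ne_bot.mpr hW
    obtain ⟨μ, hμ⟩ := exists_eigenvalue ((f i).restrict (hWf i))
    obtain ⟨⟨w, hwW⟩, hw⟩ := hμ.exists_hasEigenvector
    have hW' : W ⊓ eigenspace (f i) μ ≠ ⊥ := by
      refine Submodule.ne_bot_iff _ |>.mpr ⟨w, ⟨hwW, ?_⟩, fun h => hw.2 (Subtype.ext h)⟩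
      simpa [mem_eigenspace_iff, Subtype.ext_iff] using hw.apply_eq_smul
    obtain ⟨v, ⟨hvW, hvi⟩, hv0, hvs⟩ := ih hW' fun j v hv => by
      refine Submodule.mem_inf.mpr ⟨hWf j v hv.1, ?_⟩
      have hv := mem_eigenspace_iff.mp hv.2
      rw [mem_eigenspace_iff, ← mul_apply, ← (hf j i).eq, mul_apply, hv, map_smul]
    exact ⟨v, hvW, hv0, Finset.forall_mem_insert _ _ _ |>.mpr ⟨⟨μ, mem_eigenspace_iff.mp hvi⟩, hvs⟩⟩

end Module.End

lemma AddChar.map_sum_eq_prod {ι A M : Type*} [AddCommMonoid A] [CommMonoid M] (ψ : AddChar A M)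
    (s : Finset ι) (f : ι → A) : ψ (∑ i ∈ s, f i) = ∏ i ∈ s, ψ (f i) := by
  classical
  induction s using Finset.induction_on with
  | empty => simp
  | insert a s ha ih => rw [Finset.sum_insert ha, Finset.prod_insert ha, ψ.map_add_eq_mul, ih]

def sympForm (p n : ℕ) : BilinForm (ZMod p) (Fin n → ZMod p × ZMod p) :=
  LinearMap.mk₂ (ZMod p) (symp p n)
    (fun _ _ _ => by
      simp only [symp, Pi.add_apply, Prod.fst_add, Prod.snd_add, add_mul, Finset.sum_add_distrib,
        Finset.sum_sub_distrib]
      ring)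
    (fun _ _ _ => by simp [symp, Finset.mul_sum, mul_sub, mul_assoc])
    (fun _ _ _ => by
      simp only [symp, Pi.add_apply, Prod.fst_add, Prod.snd_add, mul_add, Finset.sum_add_distrib,
        Finset.sum_sub_distrib]
      ring)
    (fun _ _ _ => by simp [symp, Finset.mul_sum, mul_sub, mul_left_comm])

lemma sympForm_apply (p n : ℕ) (u v : Fin n → ZMod p × ZMod p) :
    sympForm p n u v = symp p n u v := rfl

lemma sympForm_isAlt (p n : ℕ) : (sympForm p n).IsAlt := fun u => by
  simp [sympForm_apply, symp, mul_comm]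

lemma sympForm_nondegenerate (p n : ℕ) : (sympForm p n).Nondegenerate := by
  refine (sympForm_isAlt p n).isRefl.nondegenerate_iff_separatingLeft.mpr fun u hu => ?_
  funext t
  have h₁ : (u t).2 = 0 := by
    simpa [sympForm_apply, symp, Pi.single_apply, apply_ite Prod.fst, apply_ite Prod.snd]
      using hu (Pi.single t (1, 0))
  have h₂ : (u t).1 = 0 := by
    simpa [sympForm_apply, symp, Pi.single_apply, apply_ite Prod.fst, apply_ite Prod.snd]
      using hu (Pi.single t (0, 1))
  exact Prod.ext h₂ h₁

lemma symp_eq_dotProduct {p n : ℕ} (u v : Fin n → ZMod p × ZMod p) :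
    symp p n u v = (Prod.snd ∘ u) ⬝ᵥ (Prod.fst ∘ v) - (Prod.fst ∘ u) ⬝ᵥ (Prod.snd ∘ v) := by
  simp [symp, dotProduct, Finset.sum_sub_distrib]

section Pauli

variable {p n : ℕ} [NeZero p]

lemma omg_pow_val (x : ZMod p) : omg p ^ x.val = ZMod.stdAddChar x := by
  rw [ZMod.stdAddChar_apply, ZMod.toCircle_apply, omg, ← Complex.exp_nat_mul]
  ring_nf

lemma XZ_apply (u : Fin n → ZMod p × ZMod p) (j i : Fin n → ZMod p) :
    XZ p n u j i = if j = i + Prod.fst ∘ u then ZMod.stdAddChar ((Prod.snd ∘ u) ⬝ᵥ i) else 0 := by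
  simp only [XZ, omg_pow_val, Fintype.prod_ite_zero, funext_iff, Pi.add_apply, dotProduct,
    AddChar.map_sum_eq_prod, Function.comp_apply]
  congr

lemma XZ_mulVec_apply (u : Fin n → ZMod p × ZMod p) (x : (Fin n → ZMod p) → ℂ)
    (j : Fin n → ZMod p) :
    (XZ p n u *ᵥ x) j =
      ZMod.stdAddChar ((Prod.snd ∘ u) ⬝ᵥ (j - Prod.fst ∘ u)) * x (j - Prod.fst ∘ u) := by
  rw [mulVec, dotProduct, Finset.sum_eq_single (j - Prod.fst ∘ u)]
  · simp [XZ_apply]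
  · intro i _ hi
    rw [XZ_apply, if_neg (by rintro rfl; simp at hi), zero_mul]
  · simp

lemma XZ_zero_mulVec (x : (Fin n → ZMod p) → ℂ) : XZ p n 0 *ᵥ x = x := by
  funext j
  simp [XZ_mulVec_apply]

lemma XZ_mulVec_XZ_mulVec (u v : Fin n → ZMod p × ZMod p) (x : (Fin n → ZMod p) → ℂ) :
    XZ p n u *ᵥ XZ p n v *ᵥ x =
      ZMod.stdAddChar ((Prod.snd ∘ u) ⬝ᵥ (Prod.fst ∘ v)) • XZ p n (u + v) *ᵥ x := by
  funext j
  have hfst : Prod.fst ∘ (u + v) = Prod.fst ∘ u + Prod.fst ∘ v := rfl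
  have hsnd : Prod.snd ∘ (u + v) = Prod.snd ∘ u + Prod.snd ∘ v := rfl
  simp only [XZ_mulVec_apply, Pi.smul_apply, smul_eq_mul, hfst, hsnd, sub_sub, ← mul_assoc,
    ← AddChar.map_add_eq_mul]
  congr 2
  simp only [dotProduct_sub, add_dotProduct, dotProduct_add]
  ring

lemma XZ_mulVec_XZ_mulVec_comm (u v : Fin n → ZMod p × ZMod p) (x : (Fin n → ZMod p) → ℂ) :
    XZ p n u *ᵥ XZ p n v *ᵥ x = ZMod.stdAddChar (symp p n u v) • XZ p n v *ᵥ XZ p n u *ᵥ x := by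
  rw [XZ_mulVec_XZ_mulVec, XZ_mulVec_XZ_mulVec, add_comm v, smul_smul,
    ← AddChar.map_add_eq_mul, symp_eq_dotProduct, dotProduct_comm (Prod.fst ∘ u),
    sub_add_cancel]

variable (p n) in
noncomputable def pauli (u : Fin n → ZMod p × ZMod p) :
    EuclideanSpace ℂ (Fin n → ZMod p) →ₗᵢ[ℂ] EuclideanSpace ℂ (Fin n → ZMod p) where
  toLinearMap := Matrix.toLpLin 2 2 (XZ p n u)
  norm_map' x := by
    simp only [EuclideanSpace.norm_eq]
    congr 1
    simp only [toLpLin_apply, XZ_mulVec_apply, norm_mul, AddChar.norm_apply, one_mul]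
    exact Equiv.sum_comp (Equiv.subRight _) fun j => ‖x j‖ ^ 2

lemma ofLp_pauli (u : Fin n → ZMod p × ZMod p) (x : EuclideanSpace ℂ (Fin n → ZMod p)) :
    WithLp.ofLp (pauli p n u x) = XZ p n u *ᵥ WithLp.ofLp x := rfl

lemma pauli_pauli (u v : Fin n → ZMod p × ZMod p) (x : EuclideanSpace ℂ (Fin n → ZMod p)) :
    pauli p n u (pauli p n v x) =
      ZMod.stdAddChar ((Prod.snd ∘ u) ⬝ᵥ (Prod.fst ∘ v)) • pauli p n (u + v) x :=
  WithLp.ofLp_injective 2 (XZ_mulVec_XZ_mulVec u v _)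

lemma pauli_pauli_comm (u v : Fin n → ZMod p × ZMod p) (x : EuclideanSpace ℂ (Fin n → ZMod p)) :
    pauli p n u (pauli p n v x) = ZMod.stdAddChar (symp p n u v) • pauli p n v (pauli p n u x) :=
  WithLp.ofLp_injective 2 (XZ_mulVec_XZ_mulVec_comm u v _)

lemma pauli_zero_apply (x : EuclideanSpace ℂ (Fin n → ZMod p)) : pauli p n 0 x = x :=
  WithLp.ofLp_injective 2 (XZ_zero_mulVec _)

lemma exists_pow_pauli_apply_eq_smul (u : Fin n → ZMod p × ZMod p) (r : ℕ) :
    ∃ θ : ℂ, ∀ x, (pauli p n u ^ r) x = θ • pauli p n (r • u) x := by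
  induction r with
  | zero => exact ⟨1, fun x => by simp [pauli_zero_apply]⟩
  | succ r ih =>
    obtain ⟨θ, hθ⟩ := ih
    refine ⟨θ * ZMod.stdAddChar ((Prod.snd ∘ u) ⬝ᵥ (Prod.fst ∘ (r • u))), fun x => ?_⟩
    rw [pow_succ', LinearIsometry.coe_mul, Function.comp_apply, hθ, map_smul, pauli_pauli,
      smul_smul, succ_nsmul']

variable (p n) in
noncomputable def codeSpace (C : Submodule (ZMod p) (Fin n → ZMod p × ZMod p)) (lam : C → ℂ) :
    Submodule ℂ (EuclideanSpace ℂ (Fin n → ZMod p)) :=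
  ⨅ c : C, Module.End.eigenspace (pauli p n c).toLinearMap (lam c)

lemma mem_codeSpace {C : Submodule (ZMod p) (Fin n → ZMod p × ZMod p)} {lam : C → ℂ}
    {φ : EuclideanSpace ℂ (Fin n → ZMod p)} :
    φ ∈ codeSpace p n C lam ↔ ∀ c : C, pauli p n c φ = lam c • φ := by
  simp [codeSpace, Submodule.mem_iInf]

variable (p n) in
def IsJointEigenvector (L : Submodule (ZMod p) (Fin n → ZMod p × ZMod p))
    (φ : EuclideanSpace ℂ (Fin n → ZMod p)) : Prop :=
  ∀ m ∈ L, ∃ μ : ℂ, pauli p n m φ = μ • φ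

lemma IsJointEigenvector.exists_pauli_pauli_apply_eq_smul
    {L : Submodule (ZMod p) (Fin n → ZMod p × ZMod p)} {φ : EuclideanSpace ℂ (Fin n → ZMod p)}
    (hφ : IsJointEigenvector p n L φ) {w} (hw : w ∈ L) (v : Fin n → ZMod p × ZMod p) :
    ∃ ν : ℂ, pauli p n w (pauli p n v φ) = ν • pauli p n v φ := by
  obtain ⟨μ, hμ⟩ := hφ w hw
  exact ⟨ZMod.stdAddChar (symp p n w v) * μ, by rw [pauli_pauli_comm, hμ, map_smul, smul_smul]⟩

end Pauli

section Stabilizer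

variable {p n : ℕ} [Fact p.Prime]

lemma inner_pauli_eq_zero_of_notMem {L : Submodule (ZMod p) (Fin n → ZMod p × ZMod p)}
    (hL : (sympForm p n).IsLagrangian L) {φ : EuclideanSpace ℂ (Fin n → ZMod p)}
    (hφ : IsJointEigenvector p n L φ) {v} (hv : v ∉ L) : ⟪φ, pauli p n v φ⟫_ℂ = 0 := by
  obtain ⟨c, hc, hcv⟩ : ∃ c ∈ L, symp p n c v ≠ 0 := by
    by_contra! h
    exact hv (hL ▸ h)
  obtain ⟨μ, hμ⟩ := hφ c hc
  refine LinearIsometry.inner_apply_eq_zero_of_apply_eq_smul (V := (pauli p n v).toLinearMap) hμ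
    (pauli_pauli_comm c v) fun h => hcv (ZMod.injective_stdAddChar ?_)
  rw [h, AddChar.map_zero_eq_one]

lemma natCast_mul_norm_inner_sq_le_of_notMem {L : Submodule (ZMod p) (Fin n → ZMod p × ZMod p)}
    (hL : (sympForm p n).IsLagrangian L) {φ x : EuclideanSpace ℂ (Fin n → ZMod p)}
    (hφ : ‖φ‖ = 1) (hφL : IsJointEigenvector p n L φ) {w} (hw : w ∉ L) {ν : ℂ}
    (hx : pauli p n w x = ν • x) : p * ‖⟪φ, x⟫_ℂ‖ ^ 2 ≤ ‖x‖ ^ 2 := by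
  refine LinearIsometry.natCast_mul_norm_inner_sq_le hφ (fun r hr hrp => ?_) hx
  obtain ⟨θ, hθ⟩ := exists_pow_pauli_apply_eq_smul w r
  have hr0 : (r : ZMod p) ≠ 0 := by
    rw [Ne, ZMod.natCast_eq_zero_iff]
    exact fun h => (Nat.eq_zero_of_dvd_of_lt h hrp).not_gt hr
  rw [hθ, inner_smul_right, inner_pauli_eq_zero_of_notMem hL hφL, mul_zero]
  rwa [← Nat.cast_smul_eq_nsmul (ZMod p), Submodule.smul_mem_iff _ hr0]

lemma norm_inner_pauli_le_of_not_le {L₀ L₁ : Submodule (ZMod p) (Fin n → ZMod p × ZMod p)}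
    (hL₀ : (sympForm p n).IsLagrangian L₀) (hL : ¬L₁ ≤ L₀)
    {φ₀ φ₁ : EuclideanSpace ℂ (Fin n → ZMod p)} (hφ₀ : ‖φ₀‖ = 1) (hφ₁ : ‖φ₁‖ = 1)
    (h₀ : IsJointEigenvector p n L₀ φ₀) (h₁ : IsJointEigenvector p n L₁ φ₁)
    (v : Fin n → ZMod p × ZMod p) : ‖⟪φ₀, pauli p n v φ₁⟫_ℂ‖ ≤ 3 / 4 := by
  obtain ⟨w, hw₁, hw₀⟩ := SetLike.not_le_iff_exists.mp hL
  obtain ⟨ν, hν⟩ := h₁.exists_pauli_pauli_apply_eq_smul hw₁ v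
  have hbessel := natCast_mul_norm_inner_sq_le_of_notMem hL₀ hφ₀ h₀ hw₀ hν
  rw [LinearIsometry.norm_map, hφ₁] at hbessel
  have hp : (2 : ℝ) ≤ p := by exact_mod_cast (Fact.out : p.Prime).two_le
  nlinarith [norm_nonneg ⟪φ₀, pauli p n v φ₁⟫_ℂ]

theorem exists_mem_span_norm_inner_pauli_le {L₀ L₁ : Submodule (ZMod p) (Fin n → ZMod p × ZMod p)}
    (hL₀ : (sympForm p n).IsLagrangian L₀) (hL₁ : (sympForm p n).IsLagrangian L₁) (hne : L₀ ≠ L₁)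
    {φ₀ φ₁ : EuclideanSpace ℂ (Fin n → ZMod p)} (hφ₀ : ‖φ₀‖ = 1) (hφ₁ : ‖φ₁‖ = 1)
    (h₀ : IsJointEigenvector p n L₀ φ₀) (h₁ : IsJointEigenvector p n L₁ φ₁) :
    ∃ φ ∈ Submodule.span ℂ {φ₀, φ₁}, ‖φ‖ = 1 ∧
      ∀ v ∉ L₀ ⊓ L₁, ‖⟪φ, pauli p n v φ⟫_ℂ‖ ≤ 3 / 4 := by
  obtain ⟨φ, hφspan, hφ, hbound⟩ := exists_mem_span_pair_norm_inner_apply_le φ₀ φ₁ hφ₀ hφ₁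
  refine ⟨φ, hφspan, hφ, fun v hv => ?_⟩
  have hc : ‖⟪φ₀, φ₁⟫_ℂ‖ ≤ 1 := by simpa [hφ₀, hφ₁] using norm_inner_le_norm (𝕜 := ℂ) φ₀ φ₁
  have h01 := norm_inner_pauli_le_of_not_le hL₀ (fun h => hne (hL₀.eq_of_le hL₁ h).symm)
    hφ₀ hφ₁ h₀ h₁ v
  have h10 := norm_inner_pauli_le_of_not_le hL₁ (fun h => hne (hL₁.eq_of_le hL₀ h))
    hφ₁ hφ₀ h₁ h₀ v
  have hsum : ‖⟪φ₀, pauli p n v φ₀⟫_ℂ‖ + ‖⟪φ₀, pauli p n v φ₁⟫_ℂ‖ +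
      ‖⟪φ₁, pauli p n v φ₀⟫_ℂ‖ + ‖⟪φ₁, pauli p n v φ₁⟫_ℂ‖ ≤ 3 / 4 * (2 + 2 * ‖⟪φ₀, φ₁⟫_ℂ‖) := by
    by_cases hv₀ : v ∈ L₀
    · obtain ⟨μ, hμ⟩ := h₀ v hv₀
      rw [(pauli p n v).sum_norm_inner_apply_eq_of_apply_eq_smul hφ₀ hμ
        (inner_pauli_eq_zero_of_notMem hL₁ h₁ fun hv₁ => hv ⟨hv₀, hv₁⟩)]
      linarith
    by_cases hv₁ : v ∈ L₁
    · obtain ⟨μ, hμ⟩ := h₁ v hv₁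
      have := (pauli p n v).sum_norm_inner_apply_eq_of_apply_eq_smul hφ₁ hμ
        (inner_pauli_eq_zero_of_notMem hL₀ h₀ hv₀)
      rw [norm_inner_symm φ₁ φ₀] at this
      linarith
    rw [inner_pauli_eq_zero_of_notMem hL₀ h₀ hv₀, inner_pauli_eq_zero_of_notMem hL₁ h₁ hv₁,
      norm_zero]
    linarith [norm_nonneg ⟪φ₀, φ₁⟫_ℂ]
  exact le_of_mul_le_mul_right ((hbound (pauli p n v).toLinearMap).trans hsum) (by positivity)

theorem exists_isJointEigenvector_mem_codeSpace
    {C L : Submodule (ZMod p) (Fin n → ZMod p × ZMod p)} {lam : C → ℂ}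
    (hL : L ≤ (sympForm p n).orthogonal L) (hCL : C ≤ L) (hQ : codeSpace p n C lam ≠ ⊥) :
    ∃ φ ∈ codeSpace p n C lam, ‖φ‖ = 1 ∧ IsJointEigenvector p n L φ := by
  classical
  have hcomm : ∀ u ∈ L, ∀ v ∈ L, ∀ x, pauli p n u (pauli p n v x) = pauli p n v (pauli p n u x) :=
    fun u hu v hv x => by rw [pauli_pauli_comm, ← sympForm_apply, hL hv u hu,
      AddChar.map_zero_eq_one, one_smul]
  obtain ⟨φ, hφQ, hφ0, hφL⟩ := Module.End.exists_ne_zero_mem_forall_apply_eq_smul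
    (fun m : L => (pauli p n m).toLinearMap)
    (fun u v => LinearMap.ext (hcomm u u.2 v v.2)) Finset.univ hQ
    (fun m x hx => mem_codeSpace.mpr fun c => by
      simp [hcomm c (hCL c.2) m m.2, mem_codeSpace.mp hx c])
  refine ⟨(‖φ‖⁻¹ : ℂ) • φ, Submodule.smul_mem _ _ hφQ, norm_smul_inv_norm hφ0, fun m hm => ?_⟩
  obtain ⟨μ, hμ⟩ := hφL ⟨m, hm⟩ (Finset.mem_univ _)
  exact ⟨μ, by rw [map_smul, show pauli p n m φ = μ • φ from hμ, smul_comm]⟩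

theorem exists_mem_codeSpace_norm_inner_pauli_le
    {C : Submodule (ZMod p) (Fin n → ZMod p × ZMod p)} (hC : C ≤ (sympForm p n).orthogonal C)
    {lam : C → ℂ} (hQ : codeSpace p n C lam ≠ ⊥) :
    ∃ φ ∈ codeSpace p n C lam, ‖φ‖ = 1 ∧ ∀ v ∉ C, ‖⟪φ, pauli p n v φ⟫_ℂ‖ ≤ 3 / 4 := by
  obtain ⟨L₀, hCL₀, hL₀, -⟩ := (sympForm p n).exists_isLagrangian_ge_inf_eq
    (sympForm_nondegenerate p n) (sympForm_isAlt p n) hC hC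
  obtain ⟨φ₀, hφ₀Q, hφ₀, h₀⟩ := exists_isJointEigenvector_mem_codeSpace hL₀.ge hCL₀ hQ
  by_cases hL₀C : L₀ ≤ C
  · refine ⟨φ₀, hφ₀Q, hφ₀, fun v hv => ?_⟩
    rw [inner_pauli_eq_zero_of_notMem hL₀ h₀ fun h => hv (hL₀C h), norm_zero]
    norm_num
  obtain ⟨L₁, hCL₁, hL₁, hL₁L₀⟩ := (sympForm p n).exists_isLagrangian_ge_inf_eq
    (sympForm_nondegenerate p n) (sympForm_isAlt p n) hC hL₀.ge
  obtain ⟨φ₁, hφ₁Q, hφ₁, h₁⟩ := exists_isJointEigenvector_mem_codeSpace hL₁.ge hCL₁ hQ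
  have hinf : L₀ ⊓ L₁ = C := by rw [inf_comm, hL₁L₀, inf_eq_left.mpr hCL₀]
  obtain ⟨φ, hφspan, hφ, hbad⟩ := exists_mem_span_norm_inner_pauli_le hL₀ hL₁
    (fun h => hL₀C (by rw [← hinf, ← h, inf_idem])) hφ₀ hφ₁ h₀ h₁
  refine ⟨φ, Submodule.span_le.mpr ?_ hφspan, hφ, fun v hv => hbad v (hinf ▸ hv)⟩
  simp [Set.insert_subset_iff, hφ₀Q, hφ₁Q]

end Stabilizer

lemma cinner_ofLp {I : Type*} [Fintype I] (x y : EuclideanSpace ℂ I) :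
    cinner (WithLp.ofLp x) (WithLp.ofLp y) = ⟪x, y⟫_ℂ := by
  simp [cinner, EuclideanSpace.inner_eq_star_dotProduct, dotProduct, mul_comm]

/-- Bad codeword lemma: a nontrivial stabilizer code contains a unit codeword `φ`
such that `|⟨φ, XZ(v)φ⟩| ≤ 3/4` for every `v ∉ C`. -/
theorem badcodeword (p n : ℕ) [Fact p.Prime]
    (C : Submodule (ZMod p) (Fin n → ZMod p × ZMod p))
    (hCself : ∀ u ∈ C, ∀ c ∈ C, symp p n c u = 0)
    (lam : C → ℂ)
    (hQ : ∃ ψ : (Fin n → ZMod p) → ℂ, ψ ≠ 0 ∧ ∀ c : C, XZ p n c.val *ᵥ ψ = lam c • ψ) :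
    ∃ φ : (Fin n → ZMod p) → ℂ,
      cinner φ φ = 1 ∧ (∀ c : C, XZ p n c.val *ᵥ φ = lam c • φ) ∧
        ∀ v : Fin n → ZMod p × ZMod p, v ∉ C →
          ‖cinner φ (XZ p n v *ᵥ φ)‖ ≤ 3 / 4 := by
  obtain ⟨ψ, hψ0, hψ⟩ := hQ
  have hψQ : WithLp.toLp 2 ψ ∈ codeSpace p n C lam :=
    mem_codeSpace.mpr fun c => WithLp.ofLp_injective 2 (hψ c)
  obtain ⟨φ, hφQ, hφ, hbad⟩ := exists_mem_codeSpace_norm_inner_pauli_le hCself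
    ((Submodule.ne_bot_iff _).mpr ⟨_, hψQ, by simpa using hψ0⟩)
  refine ⟨WithLp.ofLp φ, ?_, fun c => ?_, fun v hv => ?_⟩
  · rw [cinner_ofLp, inner_self_eq_norm_sq_to_K, hφ]
    norm_num
  · rw [← ofLp_pauli, mem_codeSpace.mp hφQ c, WithLp.ofLp_smul]
  · rw [← ofLp_pauli, cinner_ofLp]
    exact hbad v hv
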